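/- Let Ē₀ > 0, set a₀ = √(8πĒ₀/3), and define on (0,∞): a(η) = a₀η, Φ(η) = Φ̄₀/a(η), θ(η) = θ̄₀/a(η), n(η) = n̄₀/a(η)³, σ(η) = σ̄₀/a(η)³ and E_pl(η) = Ē₀/a(η)⁴ for constants Φ̄₀, θ̄₀, n̄₀, σ̄₀. Then: (1) a satisfies the Friedmann equation 3·a'(η)²/a(η)⁴ = 8π·E_pl(η) for all η > 0; (2) a(η)·Φ(η) = Φ̄₀ is constant, so (d²/dη²)(aΦ) = 0, i.e. Φ solves the massless conformally invariant field equation (1/a³)(aΦ)'' = 0 with vanishing source; and (3) the quantities scale as Φ ∝ η⁻¹, θ ∝ η⁻¹, n ∝ η⁻³, σ ∝ η⁻³, E_pl ∝ η⁻⁴. -/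

import Mathlib

/-! Since `a' = a₀` and `a₀² = 8πĒ₀/3`, both sides of the Friedmann equation equal `8πĒ₀/a⁴`.
The product `aΦ` is the constant `Φ̄₀` on the open half-line, so its second derivative vanishes
there; the scaling laws are field identities. -/

open Real Set Filter Topology

theorem deriv_deriv_eq_zero_of_eqOn_const {𝕜 F : Type*} [NontriviallyNormedField 𝕜]
    [NormedAddCommGroup F] [NormedSpace 𝕜 F] {f : 𝕜 → F} {U : Set 𝕜} {c : F} {x : 𝕜}
    (hU : IsOpen U) (hf : EqOn f (fun _ => c) U) (hx : x ∈ U) :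
    deriv (deriv f) x = 0 := by
  have hderiv : deriv f =ᶠ[𝓝 x] fun _ => 0 := by
    filter_upwards [hU.mem_nhds hx] with y hy
    rw [(hf.eventuallyEq_of_mem (hU.mem_nhds hy)).deriv_eq, deriv_const]
  rw [hderiv.deriv_eq, deriv_const]

theorem friedmann_of_linear_scale_factor {a0 E0 : ℝ} (h : 3 * a0 ^ 2 = 8 * π * E0) (η : ℝ) :
    3 * deriv (fun t => a0 * t) η ^ 2 / (a0 * η) ^ 4 = 8 * π * (E0 / (a0 * η) ^ 4) := by
  rw [deriv_const_mul_field, deriv_id'', mul_one, h, mul_div_assoc]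

/-- With `a₀ = √(8πĒ₀/3)` and, on `(0,∞)`, `a(η) = a₀η`,
`Φ = Φ̄₀/a`, `θ = θ̄₀/a`, `n = n̄₀/a³`, `σ = σ̄₀/a³`, `E_pl = Ē₀/a⁴`:
(1) the Friedmann equation `3a'²/a⁴ = 8πE_pl` holds;
(2) `a·Φ = Φ̄₀` is constant, so `(aΦ)'' = 0` and `(1/a³)(aΦ)'' = 0`
(the massless conformally invariant field equation with vanishing source);
(3) the quantities scale as `Φ ∝ η⁻¹`, `θ ∝ η⁻¹`, `n ∝ η⁻³`, `σ ∝ η⁻³`,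
`E_pl ∝ η⁻⁴`. -/
theorem stmt_19 (E0 Φ0 θ0 n0 σ0 a0 : ℝ) (hE0 : 0 < E0)
    (ha0 : a0 = Real.sqrt (8 * Real.pi * E0 / 3))
    (a Φ θ n σ Epl : ℝ → ℝ)
    (ha : a = fun η => a0 * η)
    (hΦ : Φ = fun η => Φ0 / a η)
    (hθ : θ = fun η => θ0 / a η)
    (hn : n = fun η => n0 / a η ^ 3)
    (hσ : σ = fun η => σ0 / a η ^ 3)
    (hE : Epl = fun η => E0 / a η ^ 4) :
    (∀ η > 0, 3 * deriv a η ^ 2 / a η ^ 4 = 8 * Real.pi * Epl η) ∧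
    (∀ η > 0, a η * Φ η = Φ0) ∧
    (∀ η > 0, deriv (deriv (fun t => a t * Φ t)) η = 0) ∧
    (∀ η > 0, (1 / a η ^ 3) * deriv (deriv (fun t => a t * Φ t)) η = 0) ∧
    (∀ η > 0, Φ η = (Φ0 / a0) * η⁻¹ ∧ θ η = (θ0 / a0) * η⁻¹ ∧
      n η = (n0 / a0 ^ 3) * (η⁻¹) ^ 3 ∧ σ η = (σ0 / a0 ^ 3) * (η⁻¹) ^ 3 ∧
      Epl η = (E0 / a0 ^ 4) * (η⁻¹) ^ 4) := by
  subst ha hΦ hθ hn hσ hE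
  have ha0_pos : 0 < a0 := ha0 ▸ Real.sqrt_pos.mpr (by positivity)
  have hfriedmann : 3 * a0 ^ 2 = 8 * π * E0 := by
    rw [ha0, Real.sq_sqrt (by positivity)]
    ring
  have hconst : EqOn (fun t => a0 * t * (Φ0 / (a0 * t))) (fun _ => Φ0) (Ioi 0) :=
    fun t ht => mul_div_cancel₀ _ (mul_pos ha0_pos ht).ne'
  have hfield : ∀ η > 0, deriv (deriv fun t => a0 * t * (Φ0 / (a0 * t))) η = 0 :=
    fun η hη => deriv_deriv_eq_zero_of_eqOn_const isOpen_Ioi hconst hη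
  refine ⟨fun η _ => friedmann_of_linear_scale_factor hfriedmann η, hconst, hfield,
    fun η hη => by rw [hfield η hη, mul_zero], fun η _ => ⟨?_, ?_, ?_, ?_, ?_⟩⟩ <;> ring
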